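/- Let (Ω,Σ) be a measurable space, T = (T_t)_{t∈(0,∞)} a bounded semigroup of kernel operators on B_b(Ω), and S = (S_t)_{t∈(0,∞)} := (T_t')_{t∈(0,∞)} the dual semigroup of kernel operators on M(Ω). Then the following are equivalent: (i) for each μ ∈ M(Ω), S_t μ converges with respect to the topology σ(M(Ω),B_b(Ω)) to a measure Pμ ∈ M(Ω) as t → ∞; (ii) for each f ∈ B_b(Ω), T_t f converges with respect to the topology σ(B_b(Ω),M(Ω)) to a function Qf ∈ B_b(Ω) as t → ∞. -/

import Mathlib

open MeasureTheory Filter Topology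

/-- The integral `∫ f dμ` of a function against a finite signed measure, defined via the
Jordan decomposition of `μ`. -/
noncomputable def sInt {Ω : Type*} [MeasurableSpace Ω] (μ : SignedMeasure Ω) (f : Ω → ℝ) : ℝ :=
  (∫ x, f x ∂μ.toJordanDecomposition.posPart) - ∫ x, f x ∂μ.toJordanDecomposition.negPart

/-- `f` belongs to `B_b(Ω)`, i.e. `f` is a bounded measurable real-valued function. -/
def IsBddMeas {Ω : Type*} [MeasurableSpace Ω] (f : Ω → ℝ) : Prop :=
  Measurable f ∧ ∃ C : ℝ, ∀ x, |f x| ≤ C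

/-- The total variation norm of a finite signed measure. -/
noncomputable def tvNorm {Ω : Type*} [MeasurableSpace Ω] (μ : SignedMeasure Ω) : ℝ :=
  (μ.totalVariation Set.univ).toReal

/-- A bounded kernel on `Ω`: `x ↦ k x` is a family of finite signed measures such that
`x ↦ k x A` is measurable for every measurable `A` and `sup_x |k x|(Ω) < ∞`. -/
def IsBoundedKernel {Ω : Type*} [MeasurableSpace Ω] (k : Ω → SignedMeasure Ω) : Prop :=
  (∀ A : Set Ω, MeasurableSet A → Measurable fun x => k x A) ∧
    ∃ C : ℝ, ∀ x, tvNorm (k x) ≤ C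

/-!
(i) ⇒ (ii): testing (i) against Dirac measures gives pointwise convergence
`T t f x = ∫ f d(S t δₓ) → ∫ f d(P δₓ) =: Qf x`; as `T t f` is uniformly bounded, dominated
convergence upgrades this to convergence against every `μ ∈ M(Ω)`.

(ii) ⇒ (i): by duality `∫ f d(S t μ) = ∫ T t f dμ` converges for every `f ∈ B_b(Ω)`, in particular
on indicators, so `S t μ` converges setwise. By the Nikodym convergence theorem (Baire's theorem on
the measure algebra of a dominating finite measure) the setwise limit is a signed measure `Pμ`.
Uniform approximation of `f` by simple functions, together with the bound
`‖S t μ‖ ≤ 2 sup ‖k t x‖ ‖μ‖`, identifies the limit of `∫ f d(S t μ)` with `∫ f dPμ`.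
-/

open scoped NNReal symmDiff Function

section

variable {Ω : Type*} [MeasurableSpace Ω]

namespace MeasureTheory.SignedMeasure

variable (ν : SignedMeasure Ω)

lemma apply_eq_posPart_sub_negPart {A : Set Ω} (hA : MeasurableSet A) :
    ν A = ν.toJordanDecomposition.posPart.real A - ν.toJordanDecomposition.negPart.real A := by
  conv_lhs => rw [← ν.toSignedMeasure_toJordanDecomposition]
  exact Measure.toSignedMeasure_sub_apply hA

lemma abs_apply_le_totalVariation (A : Set Ω) : |ν A| ≤ ν.totalVariation.real A := by
  by_cases hA : MeasurableSet A
  · rw [apply_eq_posPart_sub_negPart ν hA, SignedMeasure.totalVariation, measureReal_add_apply]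
    exact (abs_sub _ _).trans (by simp only [abs_of_nonneg measureReal_nonneg, le_refl])
  · rw [VectorMeasure.not_measurable _ hA, abs_zero]
    exact measureReal_nonneg

lemma tvNorm_eq : tvNorm ν = ν.totalVariation.real Set.univ := rfl

lemma abs_apply_le_tvNorm (A : Set Ω) : |ν A| ≤ tvNorm ν :=
  (abs_apply_le_totalVariation ν A).trans (measureReal_mono (Set.subset_univ A))

lemma tvNorm_le_two_mul {M : ℝ} (h : ∀ A, MeasurableSet A → |ν A| ≤ M) : tvNorm ν ≤ 2 * M := by
  obtain ⟨i, hi, hi₂, hi₃, hpos, hneg⟩ := ν.toJordanDecomposition_spec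
  have hpos_univ : ν.toJordanDecomposition.posPart.real Set.univ = ν i := by
    rw [hpos, measureReal_def, SignedMeasure.toMeasureOfZeroLE_apply _ hi₂ hi MeasurableSet.univ]
    simp
  have hneg_univ : ν.toJordanDecomposition.negPart.real Set.univ = -ν iᶜ := by
    rw [hneg, measureReal_def,
      SignedMeasure.toMeasureOfLEZero_apply _ hi₃ hi.compl MeasurableSet.univ]
    simp
  rw [tvNorm_eq, SignedMeasure.totalVariation, measureReal_add_apply, hpos_univ, hneg_univ]
  linarith [(abs_le.1 (h i hi)).2, (abs_le.1 (h iᶜ hi.compl)).1]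

end MeasureTheory.SignedMeasure

section sInt

lemma IsBddMeas.integrable {f : Ω → ℝ} (hf : IsBddMeas f) (m : Measure Ω) [IsFiniteMeasure m] :
    Integrable f m :=
  let ⟨hfm, C, hC⟩ := hf
  .of_bound hfm.aestronglyMeasurable C (.of_forall hC)

lemma isBddMeas_simpleFunc (g : SimpleFunc Ω ℝ) : IsBddMeas g :=
  ⟨g.measurable, g.exists_forall_norm_le⟩

lemma isBddMeas_apply_of_isBoundedKernel {κ : Ω → SignedMeasure Ω} (hκ : IsBoundedKernel κ)
    {A : Set Ω} (hA : MeasurableSet A) : IsBddMeas fun x => κ x A :=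
  let ⟨C, hC⟩ := hκ.2
  ⟨hκ.1 A hA, C, fun x => ((κ x).abs_apply_le_tvNorm A).trans (hC x)⟩

lemma isBddMeas_indicator_one {A : Set Ω} (hA : MeasurableSet A) :
    IsBddMeas (A.indicator 1) :=
  ⟨measurable_one.indicator hA, 1, fun x => by
    by_cases hx : x ∈ A <;> simp [hx]⟩

variable (ν : SignedMeasure Ω)

lemma sInt_sub {f g : Ω → ℝ} (hf : IsBddMeas f) (hg : IsBddMeas g) :
    sInt ν (fun x => f x - g x) = sInt ν f - sInt ν g := by
  simp only [sInt, integral_sub (hf.integrable _) (hg.integrable _)]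
  ring

lemma sInt_finset_sum {ι : Type*} (s : Finset ι) {F : ι → Ω → ℝ}
    (hF : ∀ i ∈ s, IsBddMeas (F i)) :
    sInt ν (fun x => ∑ i ∈ s, F i x) = ∑ i ∈ s, sInt ν (F i) := by
  simp only [sInt, Finset.sum_sub_distrib]
  rw [integral_finsetSum s fun i hi => (hF i hi).integrable _,
    integral_finsetSum s fun i hi => (hF i hi).integrable _]

lemma sInt_mul_const (f : Ω → ℝ) (c : ℝ) : sInt ν (fun x => f x * c) = sInt ν f * c := by
  simp only [sInt, integral_mul_const, sub_mul]

lemma abs_sInt_le {f : Ω → ℝ} {c : ℝ} (hf : ∀ x, |f x| ≤ c) : |sInt ν f| ≤ c * tvNorm ν := by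
  have hbound : ∀ m : Measure Ω, [IsFiniteMeasure m] → |∫ x, f x ∂m| ≤ c * m.real Set.univ :=
    fun m _ => by
      simpa only [Real.norm_eq_abs] using norm_integral_le_of_norm_le_const (μ := m) (f := f)
        (.of_forall fun x => by simpa using hf x)
  rw [ν.tvNorm_eq, SignedMeasure.totalVariation, measureReal_add_apply, mul_add]
  exact (abs_sub _ _).trans (add_le_add (hbound _) (hbound _))

lemma abs_sInt_sub_le {f g : Ω → ℝ} (hf : IsBddMeas f) (hg : IsBddMeas g) {ε : ℝ}
    (hfg : ∀ x, |f x - g x| ≤ ε) : |sInt ν f - sInt ν g| ≤ ε * tvNorm ν := by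
  rw [← sInt_sub ν hf hg]
  exact abs_sInt_le ν hfg

lemma sInt_simpleFunc (g : SimpleFunc Ω ℝ) : sInt ν g = ∑ v ∈ g.range, ν (g ⁻¹' {v}) * v := by
  have hfinite : ∀ m : Measure Ω, [IsFiniteMeasure m] →
      ∫ x, g x ∂m = ∑ v ∈ g.range, m.real (g ⁻¹' {v}) * v := fun m _ => by
    rw [← g.integral_eq_integral (g.integrable_of_isFiniteMeasure), SimpleFunc.integral_eq]
    simp only [smul_eq_mul]
  rw [sInt, hfinite, hfinite, ← Finset.sum_sub_distrib]
  exact Finset.sum_congr rfl fun v _ => by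
    rw [ν.apply_eq_posPart_sub_negPart (g.measurableSet_preimage _), sub_mul]

lemma sInt_toSignedMeasure (m : Measure Ω) [IsFiniteMeasure m] (f : Ω → ℝ) :
    sInt m.toSignedMeasure f = ∫ x, f x ∂m := by
  have hjordan : m.toSignedMeasure.toJordanDecomposition = ⟨m, 0, .zero_right⟩ :=
    SignedMeasure.toJordanDecomposition_eq <| by
      simp [JordanDecomposition.toSignedMeasure]
  simp [sInt, hjordan]

lemma sInt_indicator_one {A : Set Ω} (hA : MeasurableSet A) :
    sInt ν (A.indicator 1) = ν A := by
  rw [sInt, integral_indicator_one hA, integral_indicator_one hA,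
    ν.apply_eq_posPart_sub_negPart hA]

lemma tendsto_sInt_of_dominated {ι : Type*} {l : Filter ι} [l.IsCountablyGenerated]
    {F : ι → Ω → ℝ} {f : Ω → ℝ} {c : ℝ}
    (hFm : ∀ᶠ i in l, Measurable (F i)) (hFc : ∀ᶠ i in l, ∀ x, |F i x| ≤ c)
    (hFf : ∀ x, Tendsto (fun i => F i x) l (𝓝 (f x))) :
    Tendsto (fun i => sInt ν (F i)) l (𝓝 (sInt ν f)) := by
  have hdom : ∀ m : Measure Ω, [IsFiniteMeasure m] →
      Tendsto (fun i => ∫ x, F i x ∂m) l (𝓝 (∫ x, f x ∂m)) := fun m _ =>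
    tendsto_integral_filter_of_dominated_convergence (fun _ => c)
      (hFm.mono fun _ h => h.aestronglyMeasurable) (hFc.mono fun _ h => .of_forall h)
      (integrable_const c) (.of_forall hFf)
  exact (hdom _).sub (hdom _)

lemma sInt_dirac (x : Ω) {g : Ω → ℝ} (hg : Measurable g) :
    sInt (Measure.dirac x).toSignedMeasure g = g x := by
  rw [sInt_toSignedMeasure, integral_dirac' _ _ hg.stronglyMeasurable]

end sInt

section Approximation

lemma IsBddMeas.mul_const {f : Ω → ℝ} (hf : IsBddMeas f) (c : ℝ) :
    IsBddMeas fun x => f x * c :=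
  let ⟨hfm, C, hC⟩ := hf
  ⟨hfm.mul_const c, C * |c|, fun x => by
    rw [abs_mul]; exact mul_le_mul_of_nonneg_right (hC x) (abs_nonneg c)⟩

lemma exists_simpleFunc_abs_sub_le {f : Ω → ℝ} (hf : IsBddMeas f) {ε : ℝ} (hε : 0 < ε) :
    ∃ g : SimpleFunc Ω ℝ, ∀ x, |f x - g x| ≤ ε := by
  obtain ⟨hfm, c, hc⟩ := hf
  have hmeas : Measurable fun x => ε * ⌊f x / ε⌋ :=
    measurable_const.mul (measurable_from_top.comp (hfm.div_const ε).floor)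
  have hrange : (Set.range fun x => ε * ⌊f x / ε⌋).Finite := by
    refine ((Set.finite_Icc ⌊-c / ε⌋ ⌊c / ε⌋).image fun z : ℤ => ε * z).subset ?_
    rintro _ ⟨x, rfl⟩
    have hx := abs_le.1 (hc x)
    exact ⟨_, ⟨Int.floor_mono (div_le_div_of_nonneg_right hx.1 hε.le),
      Int.floor_mono (div_le_div_of_nonneg_right hx.2 hε.le)⟩, rfl⟩
  refine ⟨⟨fun x => ε * ⌊f x / ε⌋, fun v => hmeas (measurableSet_singleton v), hrange⟩,
    fun x => ?_⟩
  have hfract : f x - ε * ⌊f x / ε⌋ = ε * Int.fract (f x / ε) := by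
    rw [Int.fract, mul_sub, mul_div_cancel₀ _ hε.ne']
  change |f x - ε * ⌊f x / ε⌋| ≤ ε
  rw [hfract, abs_of_nonneg (mul_nonneg hε.le (Int.fract_nonneg _))]
  exact mul_le_of_le_one_right hε.le (Int.fract_lt_one _).le

lemma exists_seq_simpleFunc_tendstoUniformly {f : Ω → ℝ} (hf : IsBddMeas f) :
    ∃ g : ℕ → SimpleFunc Ω ℝ, TendstoUniformly (fun n x => g n x) f atTop := by
  choose g hg using fun n : ℕ => exists_simpleFunc_abs_sub_le hf (Nat.one_div_pos_of_nat (n := n))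
  refine ⟨g, Metric.tendstoUniformly_iff.2 fun ε hε => ?_⟩
  obtain ⟨N, hN⟩ := exists_nat_one_div_lt hε
  filter_upwards [eventually_ge_atTop N] with n hn x
  rw [Real.dist_eq]
  refine (hg n x).trans_lt (lt_of_le_of_lt ?_ hN)
  gcongr

lemma tendstoUniformly_sInt {ι κ : Type*} {p : Filter κ} (ν : ι → SignedMeasure Ω) {K : ℝ}
    (hK : ∀ i, tvNorm (ν i) ≤ K) {g : κ → Ω → ℝ} {f : Ω → ℝ} (hg : ∀ n, IsBddMeas (g n))
    (hf : IsBddMeas f) (hgf : TendstoUniformly g f p) :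
    TendstoUniformly (fun n i => sInt (ν i) (g n)) (fun i => sInt (ν i) f) p := by
  refine Metric.tendstoUniformly_iff.2 fun ε hε => ?_
  have hK' : 0 < |K| + 1 := by positivity
  filter_upwards [Metric.tendstoUniformly_iff.1 hgf (ε / (|K| + 1)) (by positivity)] with n hn i
  have hfg : ∀ x, |f x - g n x| ≤ ε / (|K| + 1) := fun x => (hn x).le
  calc dist (sInt (ν i) f) (sInt (ν i) (g n))
      ≤ ε / (|K| + 1) * tvNorm (ν i) := abs_sInt_sub_le (ν i) hf (hg n) hfg
    _ ≤ ε / (|K| + 1) * |K| := by gcongr; exact (hK i).trans (le_abs_self K)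
    _ < ε := by rw [div_mul_eq_mul_div, div_lt_iff₀ hK']; linarith

lemma tendsto_sInt_of_tendstoUniformly {κ : Type*} {p : Filter κ} (ν : SignedMeasure Ω)
    {g : κ → Ω → ℝ} {f : Ω → ℝ} (hg : ∀ n, IsBddMeas (g n)) (hf : IsBddMeas f)
    (hgf : TendstoUniformly g f p) : Tendsto (fun n => sInt ν (g n)) p (𝓝 (sInt ν f)) :=
  (tendstoUniformly_sInt (fun _ : Unit => ν) (fun _ => le_rfl) hg hf hgf).tendsto_at ()

lemma tendsto_sInt_of_tendsto_apply {ι : Type*} {l : Filter ι} (ν : ι → SignedMeasure Ω)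
    (P : SignedMeasure Ω) {K : ℝ} (hK : ∀ i, tvNorm (ν i) ≤ K)
    (hνP : ∀ A, MeasurableSet A → Tendsto (fun i => ν i A) l (𝓝 (P A)))
    {f : Ω → ℝ} (hf : IsBddMeas f) :
    Tendsto (fun i => sInt (ν i) f) l (𝓝 (sInt P f)) := by
  obtain ⟨g, hg⟩ := exists_seq_simpleFunc_tendstoUniformly hf
  have hgb : ∀ n, IsBddMeas (g n) := fun n => isBddMeas_simpleFunc _
  refine (tendstoUniformly_sInt ν hK hgb hf hg).tendsto_of_eventually_tendsto
    (.of_forall fun n => ?_) (tendsto_sInt_of_tendstoUniformly P hgb hf hg)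
  simp only [sInt_simpleFunc]
  exact tendsto_finsetSum _ fun v _ => (hνP _ ((g n).measurableSet_preimage _)).mul_const v

end Approximation

section Kernel

variable {κ : Ω → SignedMeasure Ω}

lemma measurable_sInt_of_isBoundedKernel (hκ : IsBoundedKernel κ) {f : Ω → ℝ}
    (hf : IsBddMeas f) : Measurable fun x => sInt (κ x) f := by
  obtain ⟨C, hC⟩ := hκ.2
  obtain ⟨g, hg⟩ := exists_seq_simpleFunc_tendstoUniformly hf
  have hlim := tendstoUniformly_sInt κ hC (fun n => isBddMeas_simpleFunc _) hf hg
  refine measurable_of_tendsto_metrizable (f := fun n x => sInt (κ x) (g n)) (fun n => ?_)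
    (tendsto_pi_nhds.2 hlim.tendsto_at)
  simp only [sInt_simpleFunc]
  exact Finset.measurable_sum _ fun v _ => (hκ.1 _ ((g n).measurableSet_preimage _)).mul_const v

lemma isBddMeas_sInt_of_isBoundedKernel (hκ : IsBoundedKernel κ) {f : Ω → ℝ}
    (hf : IsBddMeas f) : IsBddMeas fun x => sInt (κ x) f := by
  obtain ⟨C, hC⟩ := hκ.2
  obtain ⟨c, hc⟩ := hf.2
  refine ⟨measurable_sInt_of_isBoundedKernel hκ hf, c * C, fun x => ?_⟩
  exact (abs_sInt_le (κ x) hc).trans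
    (mul_le_mul_of_nonneg_left (hC x) ((abs_nonneg _).trans (hc x)))

lemma sInt_bind (hκ : IsBoundedKernel κ) {σ τ : SignedMeasure Ω}
    (hτ : ∀ A, MeasurableSet A → τ A = sInt σ fun x => κ x A) {f : Ω → ℝ} (hf : IsBddMeas f) :
    sInt τ f = sInt σ fun x => sInt (κ x) f := by
  have hsimple : ∀ g : SimpleFunc Ω ℝ, sInt τ g = sInt σ fun x => sInt (κ x) g := fun g => by
    simp only [sInt_simpleFunc]
    rw [sInt_finset_sum σ _ fun v _ =>
      (isBddMeas_apply_of_isBoundedKernel hκ (g.measurableSet_preimage _)).mul_const v]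
    exact Finset.sum_congr rfl fun v _ => by
      rw [hτ _ (g.measurableSet_preimage _), sInt_mul_const]
  obtain ⟨C, hC⟩ := hκ.2
  obtain ⟨g, hg⟩ := exists_seq_simpleFunc_tendstoUniformly hf
  have hgb : ∀ n, IsBddMeas (g n) := fun n => isBddMeas_simpleFunc _
  refine tendsto_nhds_unique (tendsto_sInt_of_tendstoUniformly τ hgb hf hg) ?_
  simp only [hsimple]
  exact tendsto_sInt_of_tendstoUniformly σ
    (fun n => isBddMeas_sInt_of_isBoundedKernel hκ (hgb n))
    (isBddMeas_sInt_of_isBoundedKernel hκ hf) (tendstoUniformly_sInt κ hC hgb hf hg)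

lemma tvNorm_bind_le {κ : Ω → SignedMeasure Ω} {C : ℝ} (hC : ∀ x, tvNorm (κ x) ≤ C)
    {σ τ : SignedMeasure Ω} (hτ : ∀ A, MeasurableSet A → τ A = sInt σ fun x => κ x A) :
    tvNorm τ ≤ 2 * (C * tvNorm σ) :=
  τ.tvNorm_le_two_mul fun A hA => by
    rw [hτ A hA]
    exact abs_sInt_le σ fun x => ((κ x).abs_apply_le_tvNorm A).trans (hC x)

lemma exists_tendsto_sInt_of_tendsto_sInt_kernel {k : ℝ → Ω → SignedMeasure Ω}
    (hk : ∀ t, 0 < t → IsBoundedKernel (k t)) (hbdd : ∃ C, ∀ t, 0 < t → ∀ x, tvNorm (k t x) ≤ C)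
    {f : Ω → ℝ} (hf : IsBddMeas f)
    (hpt : ∀ x, ∃ l, Tendsto (fun t => sInt (k t x) f) atTop (𝓝 l)) :
    ∃ Qf : Ω → ℝ, IsBddMeas Qf ∧ ∀ μ : SignedMeasure Ω,
      Tendsto (fun t => sInt μ fun x => sInt (k t x) f) atTop (𝓝 (sInt μ Qf)) := by
  obtain ⟨C, hC⟩ := hbdd
  obtain ⟨c, hc⟩ := hf.2
  let Qf : Ω → ℝ := fun x => limUnder atTop fun t => sInt (k t x) f
  have hQf : ∀ x, Tendsto (fun t => sInt (k t x) f) atTop (𝓝 (Qf x)) :=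
    fun x => tendsto_nhds_limUnder (hpt x)
  have hbound : ∀ t, 0 < t → ∀ x, |sInt (k t x) f| ≤ c * C := fun t ht x =>
    (abs_sInt_le _ hc).trans (mul_le_mul_of_nonneg_left (hC t ht x) ((abs_nonneg _).trans (hc x)))
  have hseq : Tendsto (fun n : ℕ => (n : ℝ) + 1) atTop atTop :=
    tendsto_atTop_add_const_right _ 1 tendsto_natCast_atTop_atTop
  have hmeas : Measurable Qf := measurable_of_tendsto_metrizable
    (fun n => measurable_sInt_of_isBoundedKernel (hk _ n.cast_add_one_pos) hf)
    (tendsto_pi_nhds.2 fun x => (hQf x).comp hseq)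
  have hQf_bound : ∀ x, |Qf x| ≤ c * C := fun x =>
    le_of_tendsto (hQf x).abs (eventually_gt_atTop 0 |>.mono fun t ht => hbound t ht x)
  refine ⟨Qf, ⟨hmeas, c * C, hQf_bound⟩, fun μ => tendsto_sInt_of_dominated μ (c := c * C)
    ?_ (eventually_gt_atTop 0 |>.mono hbound) hQf⟩
  exact eventually_gt_atTop 0 |>.mono fun t ht => measurable_sInt_of_isBoundedKernel (hk t ht) hf

end Kernel

section Nikodym

lemma exists_nonempty_isOpen_forall_abs_sub_le {X : Type*} [TopologicalSpace X]
    [BaireSpace X] [Nonempty X] (f : ℕ → X → ℝ) (hf : ∀ n, Continuous (f n))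
    (hcauchy : ∀ x, CauchySeq fun n => f n x) {ε : ℝ} (hε : 0 < ε) :
    ∃ N, ∃ U : Set X, IsOpen U ∧ U.Nonempty ∧ ∀ x ∈ U, ∀ n ≥ N, |f n x - f N x| ≤ ε := by
  let F : ℕ → Set X := fun N => ⋂ n ≥ N, {x | |f n x - f N x| ≤ ε}
  have hclosed : ∀ N, IsClosed (F N) := fun N =>
    isClosed_biInter fun n _ => isClosed_le ((hf n).sub (hf N)).abs continuous_const
  have hcover : ⋃ N, F N = Set.univ := Set.eq_univ_of_forall fun x => by
    obtain ⟨N, hN⟩ := Metric.cauchySeq_iff'.1 (hcauchy x) ε hε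
    exact Set.mem_iUnion.2 ⟨N, Set.mem_iInter₂.2 fun n hn => (hN n hn).le⟩
  obtain ⟨N, hN⟩ := nonempty_interior_of_iUnion_of_closed hclosed hcover
  exact ⟨N, interior (F N), isOpen_interior, hN, fun x hx => by
    simpa [F] using interior_subset hx⟩

lemma symmDiff_limsup_subset {α : Type*} (u : ℕ → Set α) (n : ℕ) :
    u n ∆ limsup u atTop ⊆ ⋃ i, u (n + i) ∆ u (n + i + 1) := by
  intro x hx
  by_contra hx'
  simp only [Set.mem_iUnion, not_exists, Set.mem_symmDiff, not_or, not_and, not_not] at hx'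
  have hconst : ∀ i, x ∈ u (n + i) ↔ x ∈ u n := by
    intro i
    induction i with
    | zero => rfl
    | succ i ih => exact ⟨fun h => ih.1 ((hx' i).2 h), fun h => (hx' i).1 (ih.2 h)⟩
  have hlimsup : x ∈ limsup u atTop ↔ x ∈ u n := by
    have hev : ∀ᶠ j in atTop, x ∈ u j ↔ x ∈ u n := eventually_atTop.2 ⟨n, fun j hj => by
      obtain ⟨i, rfl⟩ := Nat.exists_eq_add_of_le hj
      exact hconst i⟩
    rw [mem_limsup_iff_frequently_mem, frequently_congr hev, frequently_const]
  rw [Set.mem_symmDiff, hlimsup] at hx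
  tauto

/-- The measure algebra of `m`, as a pseudometric space rather than a quotient by null sets. -/
structure MeasureAlgebra (m : Measure Ω) where
  carrier : Set Ω
  measurableSet : MeasurableSet carrier

namespace MeasureAlgebra

variable {m : Measure Ω} [IsFiniteMeasure m]

noncomputable instance : PseudoMetricSpace (MeasureAlgebra m) where
  dist A B := m.real (A.carrier ∆ B.carrier)
  dist_self A := by simp
  dist_comm A B := by rw [symmDiff_comm]
  dist_triangle A B C :=
    (measureReal_mono (symmDiff_triangle _ _ _)).trans (measureReal_union_le _ _)

lemma dist_def (A B : MeasureAlgebra m) : dist A B = m.real (A.carrier ∆ B.carrier) := rfl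

lemma dist_le_of_symmDiff_subset {A B : MeasureAlgebra m} {D : Set Ω}
    (h : A.carrier ∆ B.carrier ⊆ D) : dist A B ≤ m.real D :=
  measureReal_mono h

instance : CompleteSpace (MeasureAlgebra m) := by
  refine Metric.complete_of_convergent_controlled_sequences (fun n => (1 / 2 : ℝ) ^ n)
    (fun n => by positivity) fun u hu => ?_
  let L : MeasureAlgebra m :=
    ⟨limsup (fun n => (u n).carrier) atTop,
      MeasurableSet.measurableSet_limsup fun n => (u n).measurableSet⟩
  have hstep : ∀ j, m ((u j).carrier ∆ (u (j + 1)).carrier) ≤ ENNReal.ofReal ((1 / 2) ^ j) :=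
    fun j => (ENNReal.le_ofReal_iff_toReal_le (measure_ne_top _ _) (by positivity)).2
      (hu j j (j + 1) le_rfl j.le_succ).le
  have hgeom : ∀ n : ℕ, ∑' i : ℕ, (1 / 2 : ℝ) ^ (n + i) = 2 * (1 / 2) ^ n := fun n => by
    simp only [pow_add, tsum_mul_left, tsum_geometric_two, mul_comm]
  have hdist : ∀ n, dist (u n) L ≤ 2 * (1 / 2) ^ n := fun n => by
    refine ENNReal.toReal_le_of_le_ofReal (by positivity) ?_
    calc m ((u n).carrier ∆ L.carrier)
        ≤ m (⋃ i, (u (n + i)).carrier ∆ (u (n + i + 1)).carrier) :=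
          measure_mono (symmDiff_limsup_subset (fun k => (u k).carrier) n)
      _ ≤ ∑' i, m ((u (n + i)).carrier ∆ (u (n + i + 1)).carrier) := measure_iUnion_le _
      _ ≤ ∑' i, ENNReal.ofReal ((1 / 2) ^ (n + i)) := ENNReal.tsum_le_tsum fun i => hstep _
      _ = ENNReal.ofReal (2 * (1 / 2) ^ n) := by
          rw [← ENNReal.ofReal_tsum_of_nonneg (fun _ => by positivity)
            ((summable_geometric_two.mul_left ((1 / 2) ^ n)).congr fun i => (pow_add ..).symm),
            hgeom]
  refine ⟨L, tendsto_iff_dist_tendsto_zero.2 (squeeze_zero (fun _ => dist_nonneg) hdist ?_)⟩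
  simpa using (tendsto_pow_atTop_nhds_zero_of_lt_one (r := (1 / 2 : ℝ)) (by norm_num)
    (by norm_num)).const_mul 2

lemma lipschitzWith_apply (ν : SignedMeasure Ω) {K : ℝ≥0}
    (hν : ∀ A, MeasurableSet A → |ν A| ≤ K * m.real A) :
    LipschitzWith K fun A : MeasureAlgebra m => ν A.carrier := by
  refine LipschitzWith.of_dist_le_mul fun A B => ?_
  have hA := A.measurableSet
  have hB := B.measurableSet
  have hsplit : ∀ {X Y : Set Ω}, MeasurableSet X → MeasurableSet Y → ν X = ν (X ∩ Y) + ν (X \ Y) :=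
    fun hX hY => by
      rw [← VectorMeasure.of_union (Set.disjoint_sdiff_inter.symm) (hX.inter hY) (hX.diff hY),
        Set.inter_union_sdiff]
  rw [Real.dist_eq, dist_def, Set.symmDiff_def, measureReal_union disjoint_sdiff_sdiff (hB.diff hA),
    hsplit hA hB, hsplit hB hA, Set.inter_comm, add_sub_add_left_eq_sub, mul_add]
  exact (abs_sub _ _).trans (add_le_add (hν _ (hA.diff hB)) (hν _ (hB.diff hA)))

/-- The Baire step of the Vitali–Hahn–Saks theorem. -/
lemma exists_forall_abs_sub_le (ν : ℕ → SignedMeasure Ω)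
    (hν : ∀ n, Continuous fun A : MeasureAlgebra m => ν n A.carrier)
    (hcauchy : ∀ A, MeasurableSet A → CauchySeq fun n => ν n A) {ε : ℝ} (hε : 0 < ε) :
    ∃ N, ∃ δ > 0, ∀ D, MeasurableSet D → m.real D < δ → ∀ n ≥ N, |ν n D - ν N D| ≤ 2 * ε := by
  have : Nonempty (MeasureAlgebra m) := ⟨⟨∅, .empty⟩⟩
  obtain ⟨N, U, hU, ⟨A, hA⟩, hUε⟩ := exists_nonempty_isOpen_forall_abs_sub_le
    (fun n (A : MeasureAlgebra m) => ν n A.carrier) hν (fun A => hcauchy _ A.measurableSet) hε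
  obtain ⟨δ, hδ, hball⟩ := Metric.isOpen_iff.1 hU A hA
  refine ⟨N, δ, hδ, fun D hD hmD n hn => ?_⟩
  let A₁ : MeasureAlgebra m := ⟨A.carrier ∪ D, A.measurableSet.union hD⟩
  let A₂ : MeasureAlgebra m := ⟨A.carrier \ D, A.measurableSet.diff hD⟩
  have h₁ : A₁ ∈ U := hball <| (dist_le_of_symmDiff_subset (D := D) (by
    rw [symmDiff_of_ge Set.subset_union_left, Set.union_sdiff_left]
    exact Set.sdiff_subset)).trans_lt hmD
  have h₂ : A₂ ∈ U := hball <| (dist_le_of_symmDiff_subset (D := D) (by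
    rw [symmDiff_of_le Set.sdiff_subset, Set.sdiff_sdiff_right_self]
    exact Set.inter_subset_right)).trans_lt hmD
  -- `A ∪ D` and `A \ D` both lie within `m D` of `A`, and `D` is their difference.
  have hD_eq : ∀ j, ν j D = ν j A₁.carrier - ν j A₂.carrier := fun j => by
    rw [show A₁.carrier = A₂.carrier ∪ D from Set.sdiff_union_self.symm,
      VectorMeasure.of_union Set.disjoint_sdiff_left (A.measurableSet.diff hD) hD]
    ring
  have e₁ := abs_le.1 (hUε A₁ h₁ n hn)
  have e₂ := abs_le.1 (hUε A₂ h₂ n hn)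
  rw [hD_eq, hD_eq, abs_le]
  constructor <;> linarith [e₁.1, e₁.2, e₂.1, e₂.2]

end MeasureAlgebra

lemma exists_isFiniteMeasure_abs_apply_le (ν : ℕ → SignedMeasure Ω) :
    ∃ m : Measure Ω, IsFiniteMeasure m ∧
      ∃ K : ℕ → ℝ≥0, ∀ n A, MeasurableSet A → |ν n A| ≤ K n * m.real A := by
  obtain ⟨w, hw, hsum⟩ := ENNReal.exists_pos_tsum_mul_lt_of_countable one_ne_zero
    (fun n => (ν n).totalVariation Set.univ) fun n => measure_ne_top _ _
  let m := Measure.sum fun n => w n • (ν n).totalVariation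
  have hm : IsFiniteMeasure m := ⟨by
    rw [Measure.sum_apply _ .univ]
    simpa only [Measure.smul_apply, ENNReal.smul_def, smul_eq_mul, mul_comm]
      using hsum.trans ENNReal.one_lt_top⟩
  refine ⟨m, hm, fun n => (w n)⁻¹, fun n A _ => (ν n).abs_apply_le_totalVariation A |>.trans ?_⟩
  have hle : (w n : ℝ) * (ν n).totalVariation.real A ≤ m.real A := by
    rw [← measureReal_nnreal_smul_apply]
    exact ENNReal.toReal_mono (measure_ne_top m A) (Measure.le_sum _ n A)
  rw [NNReal.coe_inv, ← div_eq_inv_mul, le_div_iff₀' (by exact_mod_cast hw n)]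
  exact hle

def IsFinitelyAdditive (φ : Set Ω → ℝ) : Prop :=
  ∀ A B, MeasurableSet A → MeasurableSet B → Disjoint A B → φ (A ∪ B) = φ A + φ B

lemma isFinitelyAdditive_measureReal (m : Measure Ω) [IsFiniteMeasure m] :
    IsFinitelyAdditive m.real :=
  fun _ _ _ hB hAB => measureReal_union hAB hB

namespace IsFinitelyAdditive

variable {φ : Set Ω → ℝ}

lemma apply_empty (hφ : IsFinitelyAdditive φ) : φ ∅ = 0 := by
  have h := hφ ∅ ∅ .empty .empty (Set.disjoint_empty _)
  rw [Set.union_empty] at h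
  linarith

lemma apply_biUnion_finset (hφ : IsFinitelyAdditive φ) {f : ℕ → Set Ω}
    (hf : ∀ i, MeasurableSet (f i)) (hd : Pairwise (Disjoint on f)) (s : Finset ℕ) :
    φ (⋃ i ∈ s, f i) = ∑ i ∈ s, φ (f i) := by
  induction s using Finset.induction_on with
  | empty => simpa using hφ.apply_empty
  | insert a s ha ih =>
    rw [Finset.set_biUnion_insert, Finset.sum_insert ha, ← ih]
    exact hφ _ _ (hf a) (s.measurableSet_biUnion fun i _ => hf i)
      (Set.disjoint_iUnion₂_right.2 fun i hi => hd fun h => ha (h ▸ hi))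

lemma apply_iUnion_eq_sum_add_apply_diff (hφ : IsFinitelyAdditive φ) {f : ℕ → Set Ω}
    (hf : ∀ i, MeasurableSet (f i)) (hd : Pairwise (Disjoint on f)) (s : Finset ℕ) :
    φ (⋃ i, f i) = ∑ i ∈ s, φ (f i) + φ ((⋃ i, f i) \ ⋃ i ∈ s, f i) := by
  have hs : MeasurableSet (⋃ i ∈ s, f i) := s.measurableSet_biUnion fun i _ => hf i
  rw [← hφ.apply_biUnion_finset hf hd s, ← hφ _ _ hs ((MeasurableSet.iUnion hf).diff hs)
    Set.disjoint_sdiff_right, Set.union_sdiff_cancel (Set.iUnion₂_subset_iUnion (· ∈ s) f)]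

lemma exists_signedMeasure_eq (hφ : IsFinitelyAdditive φ) (m : Measure Ω) [IsFiniteMeasure m]
    (hac : ∀ ε > 0, ∃ δ > 0, ∀ D, MeasurableSet D → m.real D < δ → |φ D| ≤ ε) :
    ∃ P : SignedMeasure Ω, ∀ A, MeasurableSet A → P A = φ A := by
  classical
  refine ⟨{ measureOf' := fun A => if MeasurableSet A then φ A else 0
            empty' := by simp [hφ.apply_empty]
            not_measurable' := fun A hA => if_neg hA
            m_iUnion' := fun f hf hd => ?_ }, fun A hA => if_pos hA⟩
  simp only [if_pos (hf _), if_pos (MeasurableSet.iUnion hf)]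
  let R : Finset ℕ → Set Ω := fun s => (⋃ i, f i) \ ⋃ i ∈ s, f i
  have hR : ∀ s, MeasurableSet (R s) := fun s =>
    (MeasurableSet.iUnion hf).diff (s.measurableSet_biUnion fun i _ => hf i)
  have hmR : Tendsto (fun s => m.real (R s)) atTop (𝓝 0) := by
    have hsum := m.toSignedMeasure.hasSum_of_disjoint_iUnion hf hd
    simp only [Measure.toSignedMeasure_apply_measurable (hf _),
      Measure.toSignedMeasure_apply_measurable (MeasurableSet.iUnion hf)] at hsum
    have hlim := (tendsto_const_nhds (x := m.real (⋃ i, f i))).sub hsum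
    rw [sub_self] at hlim
    exact hlim.congr fun s => by
      linarith [(isFinitelyAdditive_measureReal m).apply_iUnion_eq_sum_add_apply_diff hf hd s]
  have hφR : Tendsto (fun s => φ (R s)) atTop (𝓝 0) := by
    refine Metric.tendsto_nhds.2 fun ε hε => ?_
    obtain ⟨δ, hδ, hsmall⟩ := hac (ε / 2) (by positivity)
    filter_upwards [Metric.tendsto_nhds.1 hmR δ hδ] with s hs
    rw [Real.dist_eq, sub_zero] at hs ⊢
    exact (hsmall _ (hR s) ((le_abs_self _).trans_lt hs)).trans_lt (half_lt_self hε)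
  have hlim := (tendsto_const_nhds (x := φ (⋃ i, f i))).sub hφR
  rw [sub_zero] at hlim
  exact hlim.congr fun s => by linarith [hφ.apply_iUnion_eq_sum_add_apply_diff hf hd s]

end IsFinitelyAdditive

/-- The Nikodym convergence theorem. -/
theorem MeasureTheory.SignedMeasure.exists_tendsto_apply (ν : ℕ → SignedMeasure Ω)
    (h : ∀ A, MeasurableSet A → ∃ l, Tendsto (fun n => ν n A) atTop (𝓝 l)) :
    ∃ P : SignedMeasure Ω, ∀ A, MeasurableSet A → Tendsto (fun n => ν n A) atTop (𝓝 (P A)) := by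
  let φ : Set Ω → ℝ := fun A => limUnder atTop fun n => ν n A
  have hφ : ∀ A, MeasurableSet A → Tendsto (fun n => ν n A) atTop (𝓝 (φ A)) :=
    fun A hA => tendsto_nhds_limUnder (h A hA)
  obtain ⟨m, hm, K, hK⟩ := exists_isFiniteMeasure_abs_apply_le ν
  have hadd : IsFinitelyAdditive φ :=
    fun A B hA hB hAB => tendsto_nhds_unique (hφ _ (hA.union hB)) <| by
      simpa only [VectorMeasure.of_union hAB hA hB] using (hφ A hA).add (hφ B hB)
  have hac : ∀ ε > 0, ∃ δ > 0, ∀ D, MeasurableSet D → m.real D < δ → |φ D| ≤ ε := by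
    intro ε hε
    obtain ⟨N, δ, hδ, hN⟩ := MeasureAlgebra.exists_forall_abs_sub_le ν
      (fun n => (MeasureAlgebra.lipschitzWith_apply (ν n) (hK n)).continuous)
      (fun A hA => (hφ A hA).cauchySeq) (ε := ε / 4) (by positivity)
    refine ⟨min δ (ε / 2 / (K N + 1)), by positivity, fun D hD hmD => ?_⟩
    have hνN : |ν N D| ≤ ε / 2 := calc
      |ν N D| ≤ K N * m.real D := hK N D hD
      _ ≤ (K N + 1) * (ε / 2 / (K N + 1)) := by
          gcongr
          · linarith
          · exact hmD.le.trans (min_le_right _ _)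
      _ = ε / 2 := by field_simp
    refine le_of_tendsto (hφ D hD).abs (eventually_atTop.2 ⟨N, fun n hn => ?_⟩)
    have hosc := hN D hD (hmD.trans_le (min_le_left _ _)) n hn
    linarith [abs_sub_abs_le_abs_sub (ν n D) (ν N D)]
  obtain ⟨P, hP⟩ := hadd.exists_signedMeasure_eq m hac
  exact ⟨P, fun A hA => (hP A hA).symm ▸ hφ A hA⟩

end Nikodym

lemma exists_tendsto_sInt_of_forall_exists_tendsto (ν : ℝ → SignedMeasure Ω) {K : ℝ}
    (hK : ∀ t, 0 < t → tvNorm (ν t) ≤ K)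
    (hconv : ∀ f, IsBddMeas f → ∃ l, Tendsto (fun t => sInt (ν t) f) atTop (𝓝 l)) :
    ∃ P : SignedMeasure Ω, ∀ f, IsBddMeas f →
      Tendsto (fun t => sInt (ν t) f) atTop (𝓝 (sInt P f)) := by
  have hseq : Tendsto (fun n : ℕ => (n : ℝ) + 1) atTop atTop :=
    tendsto_atTop_add_const_right _ 1 tendsto_natCast_atTop_atTop
  obtain ⟨P, hP⟩ := SignedMeasure.exists_tendsto_apply (fun n => ν (n + 1)) fun A hA => by
    obtain ⟨l, hl⟩ := hconv _ (isBddMeas_indicator_one hA)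
    exact ⟨l, (hl.comp hseq).congr fun n => sInt_indicator_one _ hA⟩
  refine ⟨P, fun f hf => ?_⟩
  obtain ⟨l, hl⟩ := hconv f hf
  have hPf : Tendsto (fun n : ℕ => sInt (ν (n + 1)) f) atTop (𝓝 (sInt P f)) :=
    tendsto_sInt_of_tendsto_apply _ P (fun n => hK _ n.cast_add_one_pos) hP hf
  rwa [tendsto_nhds_unique (hl.comp hseq) hPf] at hl

end

theorem kernel_semigroup_weak_convergence_iff_dual_weak_convergence_general
    {Ω : Type*} [MeasurableSpace Ω]
    (k : ℝ → Ω → SignedMeasure Ω)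
    (hk : ∀ t : ℝ, 0 < t → IsBoundedKernel (k t))
    (T : ℝ → (Ω → ℝ) → Ω → ℝ)
    -- `T t` is the kernel operator on `B_b(Ω)` with kernel `k t`:
    (hT : ∀ t : ℝ, 0 < t → ∀ f : Ω → ℝ, IsBddMeas f → ∀ x, T t f x = sInt (k t x) f)
    -- boundedness of the semigroup:
    (hbdd : ∃ C : ℝ, ∀ t : ℝ, 0 < t → ∀ x, tvNorm (k t x) ≤ C)
    (S : ℝ → SignedMeasure Ω → SignedMeasure Ω)
    -- `S t = T t'` is the dual kernel operator on `M(Ω)`: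
    (hS : ∀ t : ℝ, 0 < t → ∀ (ν : SignedMeasure Ω) (A : Set Ω), MeasurableSet A →
      S t ν A = sInt ν (fun x => k t x A)) :
    -- (i) each orbit of `S` converges in `σ(M(Ω), B_b(Ω))` as `t → ∞`:
    (∀ μ : SignedMeasure Ω, ∃ Pμ : SignedMeasure Ω, ∀ f : Ω → ℝ, IsBddMeas f →
        Tendsto (fun t : ℝ => sInt (S t μ) f) atTop (𝓝 (sInt Pμ f))) ↔
    -- (ii) each orbit of `T` converges in `σ(B_b(Ω), M(Ω))` as `t → ∞`:
      (∀ f : Ω → ℝ, IsBddMeas f → ∃ Qf : Ω → ℝ, IsBddMeas Qf ∧ ∀ μ : SignedMeasure Ω,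
        Tendsto (fun t : ℝ => sInt μ (T t f)) atTop (𝓝 (sInt μ Qf))) := by
  have hTk : ∀ t, 0 < t → ∀ f, IsBddMeas f → T t f = fun x => sInt (k t x) f :=
    fun t ht f hf => funext (hT t ht f hf)
  constructor
  · intro hconv f hf
    have hdirac : ∀ t, 0 < t → ∀ x, S t (Measure.dirac x).toSignedMeasure = k t x :=
      fun t ht x => VectorMeasure.ext fun A hA => by
        rw [hS t ht _ A hA, sInt_dirac x ((hk t ht).1 A hA)]
    obtain ⟨Qf, hQf, hlim⟩ := exists_tendsto_sInt_of_tendsto_sInt_kernel hk hbdd hf fun x => by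
      obtain ⟨P, hP⟩ := hconv (Measure.dirac x).toSignedMeasure
      exact ⟨_, (hP f hf).congr' (eventually_gt_atTop 0 |>.mono fun t ht => by
        rw [hdirac t ht x])⟩
    exact ⟨Qf, hQf, fun μ => (hlim μ).congr' (eventually_gt_atTop 0 |>.mono fun t ht => by
      simp only [hTk t ht f hf])⟩
  · intro hconv μ
    obtain ⟨C, hC⟩ := hbdd
    refine exists_tendsto_sInt_of_forall_exists_tendsto (fun t => S t μ)
      (fun t ht => tvNorm_bind_le (hC t ht) (hS t ht μ)) fun f hf => ?_
    obtain ⟨Qf, -, hQf⟩ := hconv f hf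
    refine ⟨_, (hQf μ).congr' (eventually_gt_atTop 0 |>.mono fun t ht => ?_)⟩
    simp only [hTk t ht f hf, sInt_bind (hk t ht) (hS t ht μ) hf]

/-- **Weak convergence of a semigroup of kernel operators and of its dual semigroup.**
Let `T = (T t)_{t ∈ (0,∞)}` be a bounded semigroup of kernel operators on `B_b(Ω)` with
kernels `k t`, and let `S = (S t) = (T t')` be the dual semigroup on `M(Ω)`. Then the orbits
of `S` converge in `σ(M(Ω), B_b(Ω))` if and only if the orbits of `T` converge in
`σ(B_b(Ω), M(Ω))`. -/
theorem kernel_semigroup_weak_convergence_iff_dual_weak_convergence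
    {Ω : Type*} [MeasurableSpace Ω]
    (k : ℝ → Ω → SignedMeasure Ω)
    (hk : ∀ t : ℝ, 0 < t → IsBoundedKernel (k t))
    (T : ℝ → (Ω → ℝ) → Ω → ℝ)
    -- `T t` is the kernel operator on `B_b(Ω)` with kernel `k t`:
    (hT : ∀ t : ℝ, 0 < t → ∀ f : Ω → ℝ, IsBddMeas f → ∀ x, T t f x = sInt (k t x) f)
    -- `T t` maps `B_b(Ω)` into itself:
    (hTmem : ∀ t : ℝ, 0 < t → ∀ f : Ω → ℝ, IsBddMeas f → IsBddMeas (T t f))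
    -- semigroup law:
    (hsg : ∀ s t : ℝ, 0 < s → 0 < t → ∀ f : Ω → ℝ, IsBddMeas f →
      T (s + t) f = T s (T t f))
    -- boundedness of the semigroup:
    (hbdd : ∃ C : ℝ, ∀ t : ℝ, 0 < t → ∀ x, tvNorm (k t x) ≤ C)
    (S : ℝ → SignedMeasure Ω → SignedMeasure Ω)
    -- `S t = T t'` is the dual kernel operator on `M(Ω)`:
    (hS : ∀ t : ℝ, 0 < t → ∀ (ν : SignedMeasure Ω) (A : Set Ω), MeasurableSet A →
      S t ν A = sInt ν (fun x => k t x A)) :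
    -- (i) each orbit of `S` converges in `σ(M(Ω), B_b(Ω))` as `t → ∞`:
    (∀ μ : SignedMeasure Ω, ∃ Pμ : SignedMeasure Ω, ∀ f : Ω → ℝ, IsBddMeas f →
        Tendsto (fun t : ℝ => sInt (S t μ) f) atTop (𝓝 (sInt Pμ f))) ↔
    -- (ii) each orbit of `T` converges in `σ(B_b(Ω), M(Ω))` as `t → ∞`:
      (∀ f : Ω → ℝ, IsBddMeas f → ∃ Qf : Ω → ℝ, IsBddMeas Qf ∧ ∀ μ : SignedMeasure Ω,
        Tendsto (fun t : ℝ => sInt μ (T t f)) atTop (𝓝 (sInt μ Qf))) :=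
  kernel_semigroup_weak_convergence_iff_dual_weak_convergence_general k hk T hT hbdd S hS
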